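/- arXiv:2509.01859 — 4 statements merged into one kernel-verified Lean document; each statement's English description precedes it below -/
import Mathlib

section
/- The ten unit vectors in ℍ² given by e₁, e₂, and (1/√2)(1, ±q) for q ∈ {1, i, j, k} form five mutually unbiased bases: vectors within each listed pair are orthogonal, and any two vectors from different pairs have squared inner product modulus equal to 1/2. -/
noncomputable section
open Quaternion Matrix

abbrev HQ := ℍ[ℝ]
def qi : HQ := ⟨0,1,0,0⟩
def qj : HQ := ⟨0,0,1,0⟩
def qk : HQ := ⟨0,0,0,1⟩

/-- Inner product on the right ℍ-module ℍ^d. -/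
def inprod {d : ℕ} (v w : Fin d → HQ) : HQ := ∑ m, star (v m) * w m

/-- The five MUBs of ℍ²: each `mub p` is a pair of vectors. -/
def mub : Fin 5 → Fin 2 → (Fin 2 → HQ) :=
  ![![![1, 0], ![0, 1]],
    ![(Real.sqrt 2)⁻¹ • ![1, 1], (Real.sqrt 2)⁻¹ • ![1, -1]],
    ![(Real.sqrt 2)⁻¹ • ![1, qi], (Real.sqrt 2)⁻¹ • ![1, -qi]],
    ![(Real.sqrt 2)⁻¹ • ![1, qj], (Real.sqrt 2)⁻¹ • ![1, -qj]],
    ![(Real.sqrt 2)⁻¹ • ![1, qk], (Real.sqrt 2)⁻¹ • ![1, -qk]]]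

/-!
For a unit quaternion `q` put `u(q) = (1/√2)(1, q)`. Then `⟨u(a), u(b)⟩ = (1 + ā b)/2`, so `u(a)` is
a unit vector orthogonal to `u(-a)`, and for unit `a`, `b` we get `|⟨u(a), u(b)⟩|² = (1 + Re(ā b))/2`,
which is `1/2` as soon as `a ⊥ b` in `ℝ⁴`; this holds for `a, b ∈ {±1, ±i, ±j, ±k}` from different
pairs. Against the standard basis, `⟨eₘ, u(q)⟩` is the `m`-th entry of `u(q)`, of modulus `1/√2`.
-/

section InnerProduct

variable {d : ℕ}

lemma star_inprod (v w : Fin d → HQ) : star (inprod v w) = inprod w v := by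
  simp only [inprod, star_sum, star_mul, star_star]

lemma normSq_inprod_comm (v w : Fin d → HQ) :
    normSq (inprod v w) = normSq (inprod w v) := by
  rw [← star_inprod, normSq_star]

lemma inprod_single_left (i : Fin d) (w : Fin d → HQ) : inprod (Pi.single i 1) w = w i := by
  simp [inprod, Pi.single_apply, apply_ite star]

lemma inprod_smul_smul (c c' : ℝ) (v w : Fin d → HQ) :
    inprod (c • v) (c' • w) = (c * c') • inprod v w := by
  simp only [inprod, Finset.smul_sum, Pi.smul_apply, Quaternion.star_smul, smul_mul_smul_comm]

end InnerProduct

def balancedVec (q : HQ) : Fin 2 → HQ := (Real.sqrt 2)⁻¹ • ![1, q]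

section BalancedVec

variable {a b : HQ}

lemma inprod_balancedVec (a b : HQ) :
    inprod (balancedVec a) (balancedVec b) = (2⁻¹ : ℝ) • (1 + star a * b) := by
  have hsqrt : (Real.sqrt 2)⁻¹ * (Real.sqrt 2)⁻¹ = 2⁻¹ := by
    rw [← mul_inv, Real.mul_self_sqrt zero_le_two]
  rw [balancedVec, balancedVec, inprod_smul_smul, hsqrt]
  simp [inprod, Fin.sum_univ_two]

lemma inprod_balancedVec_self (ha : normSq a = 1) :
    inprod (balancedVec a) (balancedVec a) = 1 := by
  rw [inprod_balancedVec, star_mul_self, ha, Quaternion.coe_one, ← two_smul ℝ, smul_smul]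
  norm_num

lemma inprod_balancedVec_neg (ha : normSq a = 1) :
    inprod (balancedVec a) (balancedVec (-a)) = 0 := by
  rw [inprod_balancedVec, mul_neg, star_mul_self, ha]
  simp

lemma normSq_inprod_balancedVec (ha : normSq a = 1) (hb : normSq b = 1)
    (horth : (star a * b).re = 0) :
    normSq (inprod (balancedVec a) (balancedVec b)) = 1 / 2 := by
  rw [inprod_balancedVec, normSq_smul, normSq_add, map_mul, normSq_star, ha, hb, one_mul, one_mul,
    Quaternion.re_star, horth]
  norm_num

lemma normSq_balancedVec_apply (hb : normSq b = 1) (i : Fin 2) :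
    normSq (balancedVec b i) = 1 / 2 := by
  have hsqrt : ((Real.sqrt 2)⁻¹) ^ 2 = 2⁻¹ := by
    rw [inv_pow, Real.sq_sqrt zero_le_two]
  fin_cases i <;> simp [balancedVec, normSq_smul, hsqrt, hb]

end BalancedVec

def axis : Fin 4 → HQ := ![1, qi, qj, qk]

def signedAxis (p : Fin 4) : Fin 2 → HQ := ![axis p, -axis p]

lemma signedAxis_one (p : Fin 4) : signedAxis p 1 = -signedAxis p 0 := rfl

lemma normSq_signedAxis (p : Fin 4) (s : Fin 2) : normSq (signedAxis p s) = 1 := by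
  fin_cases p <;> fin_cases s <;> simp [signedAxis, axis, normSq_def'] <;> simp [qi, qj, qk]

lemma re_star_axis_mul_axis {p p' : Fin 4} (h : p ≠ p') : (star (axis p) * axis p').re = 0 := by
  fin_cases p <;> fin_cases p' <;> simp_all [axis, re_mul] <;> simp [qi, qj, qk]

lemma re_star_signedAxis_mul_signedAxis {p p' : Fin 4} (h : p ≠ p') (s s' : Fin 2) :
    (star (signedAxis p s) * signedAxis p' s').re = 0 := by
  fin_cases s <;> fin_cases s' <;> simp [signedAxis, re_star_axis_mul_axis h]

lemma mub_zero (s : Fin 2) : mub 0 s = Pi.single s 1 := by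
  fin_cases s <;> ext i <;> fin_cases i <;> rfl

lemma mub_succ (p : Fin 4) (s : Fin 2) : mub p.succ s = balancedVec (signedAxis p s) := by
  fin_cases p <;> fin_cases s <;> rfl

/-- The ten unit vectors e₁, e₂, (1/√2)(1,±q), q ∈ {1,i,j,k}, form five
mutually unbiased bases of ℍ². -/
theorem five_quaternionic_MUBs :
    (∀ p : Fin 5, ∀ s : Fin 2, inprod (mub p s) (mub p s) = 1) ∧
    (∀ p : Fin 5, inprod (mub p 0) (mub p 1) = 0) ∧
    (∀ p p' : Fin 5, p ≠ p' → ∀ s s' : Fin 2,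
      Quaternion.normSq (inprod (mub p s) (mub p' s')) = 1 / 2) := by
  refine ⟨fun p s => ?_, fun p => ?_, fun p p' hne s s' => ?_⟩
  · cases p using Fin.cases with
    | zero => rw [mub_zero, inprod_single_left, Pi.single_eq_same]
    | succ p => rw [mub_succ, inprod_balancedVec_self (normSq_signedAxis p s)]
  · cases p using Fin.cases with
    | zero => rw [mub_zero, mub_zero, inprod_single_left, Pi.single_eq_of_ne zero_ne_one]
    | succ p =>
      rw [mub_succ, mub_succ, signedAxis_one, inprod_balancedVec_neg (normSq_signedAxis p 0)]
  · cases p using Fin.cases <;> cases p' using Fin.cases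
    case zero.zero => exact absurd rfl hne
    case zero.succ p' =>
      rw [mub_zero, mub_succ, inprod_single_left]
      exact normSq_balancedVec_apply (normSq_signedAxis p' s') s
    case succ.zero p =>
      rw [normSq_inprod_comm, mub_zero, mub_succ, inprod_single_left]
      exact normSq_balancedVec_apply (normSq_signedAxis p s) s'
    case succ.succ p p' =>
      rw [mub_succ, mub_succ]
      exact normSq_inprod_balancedVec (normSq_signedAxis p s) (normSq_signedAxis p' s')
        (re_star_signedAxis_mul_signedAxis ((Fin.succ_injective _).ne_iff.mp hne) s s')
end
end

section
/- For a unit quaternion b, the reflection r_{a,ξ} with root a = (1/√2)(1, −b⁻¹) ∈ ℍ² and unit quaternion scalar ξ ≠ 1 equals the 2×2 matrix (1/2)·[[1+ξ, (1−ξ)b], [b⁻¹(1−ξ), b⁻¹(1+ξ)b]], and this matrix is monomial (has exactly one nonzero entry in each row and column) if and only if ξ = −1, in which case it equals [[0, b], [b⁻¹, 0]]. -/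
noncomputable section
open Quaternion Matrix

/-- The reflection r_{a,ξ} = I − a(1−ξ)a*/⟨a,a⟩ as a matrix. -/
def reflM {d : ℕ} (a : Fin d → HQ) (ξ : HQ) : Matrix (Fin d) (Fin d) HQ :=
  1 - Matrix.of (fun m n => a m * (1 - ξ) * star (a n) * (inprod a a)⁻¹)

/-- A 2×2 matrix is monomial if each row and each column has exactly one
nonzero entry. -/
def IsMonomial (M : Matrix (Fin 2) (Fin 2) HQ) : Prop :=
  (∀ r : Fin 2, ∃! c : Fin 2, M r c ≠ 0) ∧ (∀ c : Fin 2, ∃! r : Fin 2, M r c ≠ 0)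

/-!
Rescaling the root by a nonzero real does not change the reflection, so one may take the root
`u = (1, -b⁻¹)`. For a unit quaternion `b` one has `⟨u, u⟩ = 2` and `star b⁻¹ = b`, which gives
the entries of `I - u (1 - ξ) u* / 2` directly. For `ξ ≠ 1` both off-diagonal entries are nonzero,
so the matrix is monomial exactly when both diagonal entries `(1 + ξ) / 2` and
`b⁻¹ (1 + ξ) b / 2` vanish, i.e. when `ξ = -1`.
-/

theorem Fin.existsUnique_fin_two {p : Fin 2 → Prop} : (∃! i, p i) ↔ (p 0 ↔ ¬p 1) := by
  simp only [ExistsUnique, Fin.exists_fin_two, Fin.forall_fin_two, Fin.isValue, implies_true,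
    one_ne_zero, zero_ne_one, imp_false, true_and, and_true]
  tauto

theorem inprod_real_smul {d : ℕ} (c : ℝ) (v w : Fin d → HQ) :
    inprod (c • v) (c • w) = (c ^ 2 : ℝ) • inprod v w := by
  simp only [inprod, Finset.smul_sum, Pi.smul_apply, Quaternion.star_smul, smul_mul_smul_comm,
    pow_two]

theorem reflM_real_smul {d : ℕ} {c : ℝ} (hc : c ≠ 0) (a : Fin d → HQ) (ξ : HQ) :
    reflM (c • a) ξ = reflM a ξ := by
  refine Matrix.ext fun m n => ?_
  simp only [reflM, inprod_real_smul, Matrix.sub_apply, Matrix.of_apply, Pi.smul_apply,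
    Quaternion.star_smul, smul_inv₀, smul_mul_assoc, mul_smul_comm, smul_smul]
  rw [← pow_two, inv_mul_cancel₀ (pow_ne_zero 2 hc), one_smul]

theorem inprod_self_fin_two (x y : HQ) :
    inprod ![x, y] ![x, y] = (normSq x + normSq y : ℝ) := by
  simp [inprod, Fin.sum_univ_two, star_mul_self]

theorem reflM_one_neg_inv {b : HQ} (hb : normSq b = 1) (ξ : HQ) :
    reflM ![1, -b⁻¹] ξ =
      ((2 : ℝ)⁻¹ : HQ) • !![1 + ξ, (1 - ξ) * b; b⁻¹ * (1 - ξ), b⁻¹ * (1 + ξ) * b] := by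
  have hroot : inprod ![1, -b⁻¹] ![1, -b⁻¹] = (2 : ℝ) := by
    rw [inprod_self_fin_two, normSq_neg, normSq_inv, hb]; norm_num
  have hstar : star b⁻¹ = b := by
    rw [Quaternion.inv_def, Quaternion.star_smul, star_star, hb, inv_one, one_smul]
  have hb0 : b⁻¹ * b = 1 := inv_mul_cancel₀ (by rintro rfl; simp at hb)
  -- as a real scalar, `1 / 2` can be handled by `module` in the noncommutative ring `ℍ`
  rw [← Quaternion.coe_inv, ← Quaternion.algebraMap_def, algebraMap_smul]
  refine Matrix.ext fun m n => ?_
  fin_cases m <;> fin_cases n <;>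
    simp only [reflM, Matrix.sub_apply, Matrix.smul_apply, of_apply, one_apply_eq,
      one_apply_ne, ne_eq, zero_ne_one, one_ne_zero, not_false_eq_true, Fin.isValue, Fin.zero_eta,
      Fin.mk_one, cons_val', cons_val_zero, cons_val_one, cons_val_fin_one, hroot, ← coe_inv,
      mul_coe_eq_smul, star_one, star_neg, hstar, mul_one, one_mul, mul_neg, neg_mul, neg_neg,
      mul_sub, sub_mul, mul_add, add_mul, hb0, smul_neg, smul_add, sub_neg_eq_add, zero_sub,
      neg_add_rev] <;>
    module

theorem reflM_one_neg_inv_neg_one {b : HQ} (hb : normSq b = 1) :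
    reflM ![1, -b⁻¹] (-1) = !![0, b; b⁻¹, 0] := by
  rw [reflM_one_neg_inv hb, add_neg_cancel, sub_neg_eq_add, ← Quaternion.coe_inv,
    ← Quaternion.algebraMap_def, algebraMap_smul]
  refine Matrix.ext fun m n => ?_
  fin_cases m <;> fin_cases n <;>
    simp only [Matrix.smul_apply, of_apply, Fin.zero_eta, Fin.isValue, Fin.mk_one, cons_val',
      cons_val_zero, cons_val_one, cons_val_fin_one, add_mul, mul_add, one_mul, mul_one, mul_zero,
      zero_mul, smul_zero, smul_add] <;>
    module

theorem isMonomial_iff_of_offDiag_ne_zero {M : Matrix (Fin 2) (Fin 2) HQ} (h01 : M 0 1 ≠ 0)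
    (h10 : M 1 0 ≠ 0) : IsMonomial M ↔ M 0 0 = 0 ∧ M 1 1 = 0 := by
  simp only [IsMonomial, Fin.forall_fin_two, Fin.existsUnique_fin_two]
  tauto

theorem reflection_of_MUB_root_general (b ξ : HQ) (hb : normSq b = 1)
    (hξ1 : ξ ≠ 1) :
    reflM ((Real.sqrt 2)⁻¹ • ![1, -b⁻¹]) ξ =
      ((2 : ℝ)⁻¹ : HQ) • !![1 + ξ, (1 - ξ) * b; b⁻¹ * (1 - ξ), b⁻¹ * (1 + ξ) * b] ∧
    (IsMonomial (reflM ((Real.sqrt 2)⁻¹ • ![1, -b⁻¹]) ξ) ↔ ξ = -1) ∧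
    reflM ((Real.sqrt 2)⁻¹ • ![1, -b⁻¹]) (-1) = !![0, b; b⁻¹, 0] := by
  have hroot : ∀ ζ, reflM ((Real.sqrt 2)⁻¹ • ![1, -b⁻¹]) ζ = reflM ![1, -b⁻¹] ζ :=
    reflM_real_smul (by positivity) _
  have hb0 : b ≠ 0 := by rintro rfl; simp at hb
  have hξ : 1 - ξ ≠ 0 := sub_ne_zero.2 hξ1.symm
  have h2 : ((2 : ℝ) : HQ) ≠ 0 := by rw [Ne, ← Quaternion.coe_zero, Quaternion.coe_inj]; norm_num
  refine ⟨hroot ξ ▸ reflM_one_neg_inv hb ξ, ?_, hroot (-1) ▸ reflM_one_neg_inv_neg_one hb⟩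
  rw [hroot, reflM_one_neg_inv hb, isMonomial_iff_of_offDiag_ne_zero] <;>
    simp [h2, hb0, hξ, add_eq_zero_iff_eq_neg']

/-- For a unit quaternion b, the reflection with root (1/√2)(1,−b⁻¹) and unit
scalar ξ ≠ 1 equals (1/2)[[1+ξ,(1−ξ)b],[b⁻¹(1−ξ),b⁻¹(1+ξ)b]]; it is monomial
iff ξ = −1, in which case it equals [[0,b],[b⁻¹,0]]. -/
theorem reflection_of_MUB_root (b ξ : HQ) (hb : normSq b = 1)
    (hξ : normSq ξ = 1) (hξ1 : ξ ≠ 1) :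
    reflM ((Real.sqrt 2)⁻¹ • ![1, -b⁻¹]) ξ =
      ((2 : ℝ)⁻¹ : HQ) • !![1 + ξ, (1 - ξ) * b; b⁻¹ * (1 - ξ), b⁻¹ * (1 + ξ) * b] ∧
    (IsMonomial (reflM ((Real.sqrt 2)⁻¹ • ![1, -b⁻¹]) ξ) ↔ ξ = -1) ∧
    reflM ((Real.sqrt 2)⁻¹ • ![1, -b⁻¹]) (-1) = !![0, b; b⁻¹, 0] :=
  reflection_of_MUB_root_general b ξ hb hξ1
end
end

section
/- The group K of order 32 consisting of the matrices diag(q, ±q) and antidiag(q, ±q) for q ∈ Q₈ is generated by any four of the five reflections [[−1,0],[0,1]], [[0,1],[1,0]], [[0,i],[−i,0]], [[0,j],[−j,0]], [[0,k],[−k,0]]. -/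
/-! K is closed under multiplication and contains the five reflections r₀, …, r₄. Conversely,
the scalar matrices diag(i, i) = r₀r₁r₂ and diag(j, j) = r₀r₁r₃ generate the scalar copy of Q₈,
and every element of K is such a scalar times 1, r₀, r₁ or r₀r₁, so r₀, …, r₃ generate K.
Finally each rₛ is a product of the other four reflections, so any four of them suffice. -/

noncomputable section
open Quaternion Matrix

/-- The quaternion group Q₈ = {±1, ±i, ±j, ±k}. -/
def Q8 : Set HQ := {1, -1, qi, -qi, qj, -qj, qk, -qk}

/-- The five generating reflections of the group K. -/
def Kgen : Fin 5 → Matrix (Fin 2) (Fin 2) HQ :=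
  ![!![-1, 0; 0, 1], !![0, 1; 1, 0], !![0, qi; -qi, 0],
    !![0, qj; -qj, 0], !![0, qk; -qk, 0]]

/-- The group K of the 32 matrices diag(q,±q), antidiag(q,±q), q ∈ Q₈. -/
def Kset : Set (Matrix (Fin 2) (Fin 2) HQ) :=
  {M | ∃ q ∈ Q8, M = !![q, 0; 0, q] ∨ M = !![q, 0; 0, -q] ∨
    M = !![0, q; q, 0] ∨ M = !![0, q; -q, 0]}

@[simp] lemma qi_mul_qi : qi * qi = -1 := by
  ext <;> simp [re_mul, imI_mul, imJ_mul, imK_mul] <;> simp [qi]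
@[simp] lemma qj_mul_qj : qj * qj = -1 := by
  ext <;> simp [re_mul, imI_mul, imJ_mul, imK_mul] <;> simp [qj]
@[simp] lemma qk_mul_qk : qk * qk = -1 := by
  ext <;> simp [re_mul, imI_mul, imJ_mul, imK_mul] <;> simp [qk]
@[simp] lemma qi_mul_qj : qi * qj = qk := by
  ext <;> simp [re_mul, imI_mul, imJ_mul, imK_mul] <;> simp [qi, qj, qk]
@[simp] lemma qj_mul_qi : qj * qi = -qk := by
  ext <;> simp [re_mul, imI_mul, imJ_mul, imK_mul] <;> simp [qi, qj, qk]
@[simp] lemma qj_mul_qk : qj * qk = qi := by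
  ext <;> simp [re_mul, imI_mul, imJ_mul, imK_mul] <;> simp [qi, qj, qk]
@[simp] lemma qk_mul_qj : qk * qj = -qi := by
  ext <;> simp [re_mul, imI_mul, imJ_mul, imK_mul] <;> simp [qi, qj, qk]
@[simp] lemma qk_mul_qi : qk * qi = qj := by
  ext <;> simp [re_mul, imI_mul, imJ_mul, imK_mul] <;> simp [qi, qj, qk]
@[simp] lemma qi_mul_qk : qi * qk = -qj := by
  ext <;> simp [re_mul, imI_mul, imJ_mul, imK_mul] <;> simp [qi, qj, qk]

lemma neg_mem_Q8 {q : HQ} (hq : q ∈ Q8) : -q ∈ Q8 := by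
  simp only [Q8, Set.mem_insert_iff, Set.mem_singleton_iff] at hq ⊢
  rcases hq with rfl | rfl | rfl | rfl | rfl | rfl | rfl | rfl <;> simp

lemma mul_mem_Q8 {q r : HQ} (hq : q ∈ Q8) (hr : r ∈ Q8) : q * r ∈ Q8 := by
  simp only [Q8, Set.mem_insert_iff, Set.mem_singleton_iff] at hq hr ⊢
  rcases hq with rfl | rfl | rfl | rfl | rfl | rfl | rfl | rfl <;>
    rcases hr with rfl | rfl | rfl | rfl | rfl | rfl | rfl | rfl <;> simp

lemma Q8_subset_of_qi_mem_of_qj_mem (T : Submonoid HQ) (hi : qi ∈ T) (hj : qj ∈ T) :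
    Q8 ⊆ T := by
  have h_neg_one : -1 ∈ T := qi_mul_qi ▸ mul_mem hi hi
  have h_neg : ∀ q ∈ T, -q ∈ T := fun q hq => mul_neg_one q ▸ mul_mem hq h_neg_one
  have hk : qk ∈ T := qi_mul_qj ▸ mul_mem hi hj
  rintro q (rfl | rfl | rfl | rfl | rfl | rfl | rfl | rfl)
  exacts [one_mem T, h_neg_one, hi, h_neg _ hi, hj, h_neg _ hj, hk, h_neg _ hk]

lemma mul_mem_Kset {M N : Matrix (Fin 2) (Fin 2) HQ} (hM : M ∈ Kset) (hN : N ∈ Kset) :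
    M * N ∈ Kset := by
  obtain ⟨q, hq, rfl | rfl | rfl | rfl⟩ := hM <;> obtain ⟨r, hr, rfl | rfl | rfl | rfl⟩ := hN <;>
    first
      | (refine ⟨q * r, mul_mem_Q8 hq hr, ?_⟩; simp; done)
      | (refine ⟨-(q * r), neg_mem_Q8 (mul_mem_Q8 hq hr), ?_⟩; simp)

def Ksubmonoid : Submonoid (Matrix (Fin 2) (Fin 2) HQ) where
  carrier := Kset
  one_mem' := ⟨1, by simp [Q8], Or.inl one_fin_two⟩
  mul_mem' := mul_mem_Kset

lemma Kgen_mem_Kset (s : Fin 5) : Kgen s ∈ Kset := by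
  fin_cases s
  · exact ⟨-1, by simp [Q8], by simp [Kgen]⟩
  · exact ⟨1, by simp [Q8], by simp [Kgen]⟩
  · exact ⟨qi, by simp [Q8], by simp [Kgen]⟩
  · exact ⟨qj, by simp [Q8], by simp [Kgen]⟩
  · exact ⟨qk, by simp [Q8], by simp [Kgen]⟩

lemma scalar_fin_two (q : HQ) : scalar (Fin 2) q = !![q, 0; 0, q] := by
  simp [diagonal_fin_two]

lemma Kset_subset_of_Kgen_mem (S : Submonoid (Matrix (Fin 2) (Fin 2) HQ))
    (h0 : Kgen 0 ∈ S) (h1 : Kgen 1 ∈ S) (h2 : Kgen 2 ∈ S) (h3 : Kgen 3 ∈ S) :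
    Kset ⊆ S := by
  have h_scalar : ∀ q ∈ Q8, !![q, 0; 0, q] ∈ S := by
    intro q hq
    rw [← scalar_fin_two]
    refine Q8_subset_of_qi_mem_of_qj_mem (S.comap (scalar (Fin 2))) ?_ ?_ hq
    · have e : Kgen 0 * Kgen 1 * Kgen 2 = scalar (Fin 2) qi := by
        rw [scalar_fin_two]; simp [Kgen]
      exact Submonoid.mem_comap.mpr (e ▸ mul_mem (mul_mem h0 h1) h2)
    · have e : Kgen 0 * Kgen 1 * Kgen 3 = scalar (Fin 2) qj := by
        rw [scalar_fin_two]; simp [Kgen]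
      exact Submonoid.mem_comap.mpr (e ▸ mul_mem (mul_mem h0 h1) h3)
  rintro M ⟨q, hq, rfl | rfl | rfl | rfl⟩
  · exact h_scalar q hq
  · have e : Kgen 0 * !![-q, 0; 0, -q] = !![q, 0; 0, -q] := by simp [Kgen]
    exact e ▸ mul_mem h0 (h_scalar _ (neg_mem_Q8 hq))
  · have e : !![q, 0; 0, q] * Kgen 1 = !![0, q; q, 0] := by simp [Kgen]
    exact e ▸ mul_mem (h_scalar q hq) h1
  · have e : Kgen 0 * !![-q, 0; 0, -q] * Kgen 1 = !![0, q; -q, 0] := by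
      simp [Kgen]
    exact e ▸ mul_mem (mul_mem h0 (h_scalar _ (neg_mem_Q8 hq))) h1

lemma Kgen_mem_closure_compl (m s : Fin 5) :
    Kgen s ∈ Submonoid.closure (Kgen '' {t | t ≠ m}) := by
  have mem : ∀ t, t ≠ m → Kgen t ∈ Submonoid.closure (Kgen '' {t | t ≠ m}) :=
    fun t ht => Submonoid.subset_closure ⟨t, ht, rfl⟩
  obtain hs | rfl := ne_or_eq s m
  · exact mem s hs
  have of_prod : ∀ a b c d, s ∉ ({a, b, c, d} : Finset (Fin 5)) →
      Kgen a * Kgen b * Kgen c * Kgen d = Kgen s →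
      Kgen s ∈ Submonoid.closure (Kgen '' {t | t ≠ s}) := by
    intro a b c d h_ne e
    simp only [Finset.mem_insert, Finset.mem_singleton, not_or] at h_ne
    obtain ⟨ha, hb, hc, hd⟩ := h_ne
    exact e ▸ mul_mem (mul_mem (mul_mem (mem a (Ne.symm ha)) (mem b (Ne.symm hb)))
      (mem c (Ne.symm hc))) (mem d (Ne.symm hd))
  fin_cases s
  · exact of_prod 1 2 3 4 (by decide) (by simp [Kgen])
  · exact of_prod 2 3 4 0 (by decide) (by simp [Kgen])
  · exact of_prod 0 3 4 1 (by decide) (by simp [Kgen])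
  · exact of_prod 0 4 2 1 (by decide) (by simp [Kgen])
  · exact of_prod 0 2 3 1 (by decide) (by simp [Kgen])

/-- K is generated by any four of the five reflections. -/
theorem K_generated_by_any_four (m : Fin 5) :
    (Submonoid.closure (Kgen '' {s | s ≠ m}) :
      Set (Matrix (Fin 2) (Fin 2) HQ)) = Kset := by
  refine Set.Subset.antisymm ?_ ?_
  · exact (Submonoid.closure_le (S := Ksubmonoid)).mpr
      (Set.image_subset_iff.mpr fun s _ => Kgen_mem_Kset s)
  · exact Kset_subset_of_Kgen_mem _ (Kgen_mem_closure_compl m 0) (Kgen_mem_closure_compl m 1)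
      (Kgen_mem_closure_compl m 2) (Kgen_mem_closure_compl m 3)
end
end

section
/- The kernel of the action of the group P₃ on the ten MUB lines is {I, −I}; that is, g ∈ P₃ fixes each of the ten MUB lines (as a line) if and only if g = I or g = −I. -/
noncomputable section
open Quaternion Matrix

/-- The ten MUB vectors (1,0), (0,1), (1,q) for q ∈ {±1,±i,±j,±k}. -/
def mubVec : Fin 10 → (Fin 2 → HQ) :=
  ![![1, 0], ![0, 1], ![1, 1], ![1, -1], ![1, qi], ![1, -qi],
    ![1, qj], ![1, -qj], ![1, qk], ![1, -qk]]

/-! Fixing the lines through (1,0) and (0,1) forces g to be diagonal, and fixing the line through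
(1,1) forces equal diagonal entries, so g = cI. Fixing the lines through (1,i) and (1,j) then
forces c to commute with i and j, so c is real. The generators of P₃ are unitary, hence so is g,
and c² = 1. -/

namespace Matrix

variable {n R : Type*} [Fintype n] [DecidableEq n]

theorem diagonal_mem_unitary_iff [Ring R] [StarRing R] {d : n → R} :
    diagonal d ∈ unitary (Matrix n n R) ↔ ∀ i, d i ∈ unitary R := by
  simp only [Unitary.mem_iff, star_eq_conjTranspose, diagonal_conjTranspose,
    diagonal_mul_diagonal, ← diagonal_one, diagonal_eq_diagonal_iff, Pi.star_apply]
  exact ⟨fun h i => ⟨h.1 i, h.2 i⟩, fun h => ⟨fun i => (h i).1, fun i => (h i).2⟩⟩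

theorem scalar_mem_unitary_iff [Ring R] [StarRing R] [Nonempty n] {c : R} :
    scalar n c ∈ unitary (Matrix n n R) ↔ c ∈ unitary R := by
  simp [scalar_apply, diagonal_mem_unitary_iff]

end Matrix

section FixesLine

variable {n R : Type*} [Fintype n] [Ring R]

-- Lines are right spans, so the eigenvalue multiplies on the right.
def FixesLine (g : Matrix n n R) (v : n → R) : Prop :=
  ∃ lam : R, g *ᵥ v = fun m => v m * lam

theorem fixesLine_scalar_of_forall_commute [DecidableEq n] {c : R} {v : n → R}
    (hc : ∀ m, Commute c (v m)) : FixesLine (scalar n c) v :=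
  ⟨c, funext fun m => by simp [scalar_apply, mulVec_diagonal, (hc m).eq]⟩

theorem FixesLine.eq_scalar {g : Matrix (Fin 2) (Fin 2) R} (h₀ : FixesLine g ![1, 0])
    (h₁ : FixesLine g ![0, 1]) (h₂ : FixesLine g ![1, 1]) : g = scalar (Fin 2) (g 0 0) := by
  obtain ⟨_, e₀⟩ := h₀
  obtain ⟨_, e₁⟩ := h₁
  obtain ⟨_, e₂⟩ := h₂
  have h₁₀ : g 1 0 = 0 := by simpa [mulVec, dotProduct] using congrFun e₀ 1
  have h₀₁ : g 0 1 = 0 := by simpa [mulVec, dotProduct] using congrFun e₁ 0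
  have h₁₁ : g 1 1 = g 0 0 := by
    have e₂₀ := congrFun e₂ 0
    have e₂₁ := congrFun e₂ 1
    simp only [mulVec, dotProduct, Fin.sum_univ_two] at e₂₀ e₂₁
    simpa [h₁₀, h₀₁] using e₂₁.trans e₂₀.symm
  ext i j
  fin_cases i <;> fin_cases j <;> simp [h₁₀, h₀₁, h₁₁]

theorem FixesLine.commute_of_scalar {c q : R} (h : FixesLine (scalar (Fin 2) c) ![1, q]) :
    Commute c q := by
  obtain ⟨lam, e⟩ := h
  have hlam : c = lam := by simpa [scalar_apply, mulVec_diagonal] using congrFun e 0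
  have h₁ : c * q = q * lam := by simpa [scalar_apply, mulVec_diagonal] using congrFun e 1
  rwa [← hlam] at h₁

end FixesLine

namespace Quaternion

variable {R : Type*} [CommRing R]

theorem mem_unitary_iff {a : ℍ[R]} : a ∈ unitary ℍ[R] ↔ normSq a = 1 := by
  rw [Unitary.mem_iff, star_mul_self, self_mul_star, ← coe_one, coe_inj, and_self]

theorem coe_mem_unitary_iff {r : R} : (r : ℍ[R]) ∈ unitary ℍ[R] ↔ r ^ 2 = 1 := by
  rw [mem_unitary_iff, normSq_coe]

end Quaternion

theorem eq_coe_re_of_commute_qi_of_commute_qj {c : HQ} (hi : Commute c qi) (hj : Commute c qj) :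
    c = c.re := by
  rw [commute_iff_eq, Quaternion.ext_iff] at hi hj
  simp only [Quaternion.re_mul, Quaternion.imI_mul, Quaternion.imJ_mul, Quaternion.imK_mul] at hi hj
  simp [qi, qj] at hi hj
  ext <;> simp <;> linarith

theorem qi_mem_unitary : qi ∈ unitary HQ := by
  rw [Quaternion.mem_unitary_iff, Quaternion.normSq_def']; simp [qi]

theorem qj_mem_unitary : qj ∈ unitary HQ := by
  rw [Quaternion.mem_unitary_iff, Quaternion.normSq_def']; simp [qj]

theorem hadamard_mem_unitary :
    (((Real.sqrt 2)⁻¹ : ℝ) : HQ) • !![1, 1; 1, -1] ∈ unitary (Matrix (Fin 2) (Fin 2) HQ) := by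
  set r : ℝ := (Real.sqrt 2)⁻¹
  set M : Matrix (Fin 2) (Fin 2) HQ := !![1, 1; 1, -1]
  have hH : (r : HQ) • M = r • M := algebraMap_smul HQ r M
  have h_star : star (r • M) = r • M := by
    ext i j : 1; fin_cases i <;> fin_cases j <;> simp [M, Matrix.star_apply, Quaternion.star_smul]
  have hM_sq : M * M = (2 : ℝ) • 1 := by
    rw [two_smul, one_add_one_eq_two, Matrix.mul_fin_two, Matrix.ofNat_fin_two]; norm_num
  have hr : r * r * 2 = 1 := by
    rw [← mul_inv, Real.mul_self_sqrt zero_le_two, inv_mul_cancel₀ two_ne_zero]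
  rw [hH, Unitary.mem_iff, h_star, smul_mul_smul_comm, hM_sq, smul_smul, hr, one_smul, and_self]

def P3 : Submonoid (Matrix (Fin 2) (Fin 2) HQ) :=
  Submonoid.closure
    {!![qi, 0; 0, 1], !![qj, 0; 0, 1], (((Real.sqrt 2)⁻¹ : ℝ) : HQ) • !![1, 1; 1, -1]}

theorem P3_le_unitary : P3 ≤ unitary (Matrix (Fin 2) (Fin 2) HQ) := by
  have h_diag : ∀ q ∈ unitary HQ, !![q, 0; 0, 1] ∈ unitary (Matrix (Fin 2) (Fin 2) HQ) :=
    fun q hq => diagonal_fin_two ![q, 1] ▸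
      diagonal_mem_unitary_iff.mpr (Fin.forall_fin_two.mpr ⟨hq, one_mem _⟩)
  refine Submonoid.closure_le.mpr ?_
  rintro g (rfl | rfl | rfl)
  exacts [h_diag qi qi_mem_unitary, h_diag qj qj_mem_unitary, hadamard_mem_unitary]

/-- The kernel of the action of P₃ on the ten MUB lines is {I, −I}:
g ∈ P₃ fixes each of the ten MUB lines iff g = I or g = −I. -/
theorem kernel_of_P3_action_on_MUB_lines :
    ∀ g ∈ Submonoid.closure
      {(!![qi, 0; 0, 1] : Matrix (Fin 2) (Fin 2) HQ), !![qj, 0; 0, 1],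
       (((Real.sqrt 2)⁻¹ : ℝ) : HQ) • !![1, 1; 1, -1]},
      ((∀ a : Fin 10, ∃ lam : HQ,
          g.mulVec (mubVec a) = fun m => mubVec a m * lam) ↔
        (g = 1 ∨ g = -1)) := by
  intro g hg
  refine ⟨fun hfix => ?_, ?_⟩
  · have hg_scalar : g = scalar (Fin 2) (g 0 0) := FixesLine.eq_scalar (hfix 0) (hfix 1) (hfix 2)
    have h_re : g 0 0 = (g 0 0).re := eq_coe_re_of_commute_qi_of_commute_qj
      (FixesLine.commute_of_scalar (hg_scalar ▸ hfix 4))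
      (FixesLine.commute_of_scalar (hg_scalar ▸ hfix 6))
    have h_unitary : ((g 0 0).re : HQ) ∈ unitary HQ := by
      rw [← h_re, ← scalar_mem_unitary_iff (n := Fin 2), ← hg_scalar]
      exact P3_le_unitary hg
    rw [Quaternion.coe_mem_unitary_iff, sq_eq_one_iff] at h_unitary
    rw [hg_scalar, h_re, ← map_one (scalar (Fin 2)), ← map_neg, scalar_inj, scalar_inj]
    rcases h_unitary with h | h <;> simp [h]
  · rw [← map_one (scalar (Fin 2)), ← map_neg]
    rintro (rfl | rfl) a
    exacts [fixesLine_scalar_of_forall_commute fun _ => Commute.one_left _,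
      fixesLine_scalar_of_forall_commute fun _ => Commute.neg_one_left _]
end
end
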